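/- For every a in A and x in V, if xa = xa*, then Ω(xa) ≤ ‖a + a*‖_A Ω(x). -/

import Mathlib

/-!
Setting: `A` is a C*-algebra and `V` is a Hilbert C*-module over `A`.
`WithCStarModule (A × V)` is the Hilbert `A`-module `A ⊕ V`, with inner product
`⟪(a, y), (b, z)⟫ = a * b + ⟪y, z⟫` and norm `‖(a, y)‖ = ‖a * a + ⟪y, y⟫‖ ^ (1/2)`
(both provided by Mathlib).  For `x : V` and `lam : ℂ` with `|lam| = 1`, the operator
`M_{x,lam} : A ⊕ V → A ⊕ V`, `(a, y) ↦ (conj lam • ⟪x, y⟫, lam • (x <• a))` is encoded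
by a family `M` of continuous linear maps satisfying the predicate `IsM` below, and the
numerical radius is `numRadius M x = (1/2) * sup_{|lam| = 1} ‖M x lam‖`.
-/

open scoped RightActions InnerProductSpace

noncomputable section

variable {A V : Type*} [NonUnitalCStarAlgebra A] [PartialOrder A] [StarOrderedRing A]
  [NormedAddCommGroup V] [Module ℂ V] [SMul Aᵐᵒᵖ V] [CStarModule Aᵐᵒᵖ V] [CompleteSpace V]

/-- The element of the Hilbert `A`-module `A ⊕ V` with components `a : A` and `y : V`. -/
def pairElem (a : A) (y : V) : WithCStarModule Aᵐᵒᵖ (Aᵐᵒᵖ × V) :=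
  (WithCStarModule.equiv Aᵐᵒᵖ (Aᵐᵒᵖ × V)).symm (MulOpposite.op a, y)

/-- `IsM M` asserts that for every `x : V` and every unimodular `lam : ℂ`, the continuous
linear map `M x lam` is the operator `M_{x,lam} : (a, y) ↦ (conj lam • ⟪x, y⟫, lam • (x <• a))`
on `A ⊕ V`. -/
def IsM (M : V → ℂ → (WithCStarModule Aᵐᵒᵖ (Aᵐᵒᵖ × V) →L[ℂ] WithCStarModule Aᵐᵒᵖ (Aᵐᵒᵖ × V))) : Prop :=
  ∀ (x : V) (lam : ℂ), ‖lam‖ = 1 → ∀ (a : A) (y : V),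
    M x lam (pairElem a y) = pairElem ((starRingEnd ℂ) lam • MulOpposite.unop (inner Aᵐᵒᵖ x y)) (lam • (x <• a))

/-- The numerical radius `Ω(x) = (1/2) * sup_{|lam| = 1} ‖M_{x,lam}‖`. -/
def numRadius (M : V → ℂ → (WithCStarModule Aᵐᵒᵖ (Aᵐᵒᵖ × V) →L[ℂ] WithCStarModule Aᵐᵒᵖ (Aᵐᵒᵖ × V)))
    (x : V) : ℝ :=
  (1 / 2) * sSup ((fun lam : ℂ => ‖M x lam‖) '' {lam : ℂ | ‖lam‖ = 1})

/-!
`M_{x,lam}` is `M_{x,1}` composed with the isometry `(c, y) ↦ (lam c, conj lam y)` of `A ⊕ V`, so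
the supremum defining `Ω(x)` is attained at every `lam` and `Ω(x) = ‖M_{x,1}‖ / 2`. Reading
`⟪x, y⟫` and `x c` off `M_{x,1}` applied to `(0, y)` and `(c, 0)` bounds them by `‖M_{x,1}‖ ‖y‖`
and `‖M_{x,1}‖ ‖c‖`; since `⟪x s, y⟫ = s* ⟪x, y⟫` and `(x s) c = x (s c)`, this gives
`Ω(x s) ≤ 2 ‖s‖ Ω(x)` for every `s : A`. Finally `x a = x a*` forces `x a = x (Re a)`, and
`2 ‖Re a‖ = ‖a + a*‖`.
-/

namespace CStarModule

variable {B E : Type*} [NonUnitalCStarAlgebra B] [PartialOrder B] [AddCommGroup E] [Module ℂ E]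
  [SMul B E] [Norm E] [CStarModule B E]

lemma ext_inner_left {x y : E} (h : ∀ w : E, inner B w x = inner B w y) : x = y := by
  rw [← sub_eq_zero, ← inner_self (A := B), inner_sub_right, h, sub_self]

lemma add_smul (b c : B) (x : E) : (b + c) • x = b • x + c • x :=
  ext_inner_left (B := B) fun w => by simp only [inner_op_smul_right, inner_add_right, add_mul]

lemma smul_smul (b c : B) (x : E) : b • c • x = (b * c) • x :=
  ext_inner_left (B := B) fun w => by simp only [inner_op_smul_right, mul_assoc]

lemma smul_assoc_complex (z : ℂ) (b : B) (x : E) : (z • b) • x = z • b • x :=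
  ext_inner_left (B := B) fun w => by
    simp only [inner_op_smul_right, inner_smul_right_complex, smul_mul_assoc]

lemma inner_smul_smul_of_norm_eq_one {z : ℂ} (hz : ‖z‖ = 1) (x y : E) :
    inner B (z • x) (z • y) = inner B x y := by
  rw [inner_smul_left_complex, inner_smul_right_complex, _root_.smul_smul, Complex.star_def,
    Complex.conj_mul', hz]
  simp

end CStarModule

open MulOpposite

section PairElem

variable {A V : Type*} [NonUnitalCStarAlgebra A] [PartialOrder A] [StarOrderedRing A]
  [NormedAddCommGroup V] [Module ℂ V] [SMul Aᵐᵒᵖ V] [CStarModule Aᵐᵒᵖ V]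

lemma norm_pairElem_le (c : A) (y : V) : ‖pairElem c y‖ ≤ ‖c‖ + ‖y‖ :=
  WithCStarModule.prod_norm_le_norm_add _

lemma norm_le_norm_pairElem_left (c : A) (y : V) : ‖c‖ ≤ ‖pairElem c y‖ :=
  (le_max_left _ _).trans (WithCStarModule.max_le_prod_norm (pairElem c y))

lemma norm_le_norm_pairElem_right (c : A) (y : V) : ‖y‖ ≤ ‖pairElem c y‖ :=
  (le_max_right _ _).trans (WithCStarModule.max_le_prod_norm (pairElem c y))

lemma norm_pairElem_smul_smul {z w : ℂ} (hz : ‖z‖ = 1) (hw : ‖w‖ = 1) (c : A) (y : V) :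
    ‖pairElem (z • c) (w • y)‖ = ‖pairElem c y‖ := by
  simp only [WithCStarModule.prod_norm, pairElem, WithCStarModule.equiv_symm_fst,
    WithCStarModule.equiv_symm_snd, op_smul,
    CStarModule.inner_smul_smul_of_norm_eq_one hz, CStarModule.inner_smul_smul_of_norm_eq_one hw]

lemma ContinuousLinearMap.opNorm_le_of_pairElem
    (T : WithCStarModule Aᵐᵒᵖ (Aᵐᵒᵖ × V) →L[ℂ] WithCStarModule Aᵐᵒᵖ (Aᵐᵒᵖ × V)) {C : ℝ}
    (hC : 0 ≤ C) (h : ∀ (c : A) (y : V), ‖T (pairElem c y)‖ ≤ C * ‖pairElem c y‖) : ‖T‖ ≤ C :=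
  T.opNorm_le_bound hC fun ξ => h ξ.1.unop ξ.2

end PairElem

namespace IsM

variable {A V : Type*} [NonUnitalCStarAlgebra A] [PartialOrder A] [NormedAddCommGroup V]
  [Module ℂ V] [SMul Aᵐᵒᵖ V] [CStarModule Aᵐᵒᵖ V]
  {M : V → ℂ → (WithCStarModule Aᵐᵒᵖ (Aᵐᵒᵖ × V) →L[ℂ] WithCStarModule Aᵐᵒᵖ (Aᵐᵒᵖ × V))}
  (hM : IsM M)
include hM

lemma apply_one (x : V) (c : A) (y : V) :
    M x 1 (pairElem c y) = pairElem (unop (inner Aᵐᵒᵖ x y)) (x <• c) := by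
  simpa using hM x 1 norm_one c y

lemma apply_eq_apply_one {lam : ℂ} (hlam : ‖lam‖ = 1) (x : V) (c : A) (y : V) :
    M x lam (pairElem c y) = M x 1 (pairElem (lam • c) ((starRingEnd ℂ) lam • y)) := by
  rw [hM x lam hlam, hM.apply_one, CStarModule.inner_smul_right_complex, unop_smul, op_smul,
    CStarModule.smul_assoc_complex]

variable [StarOrderedRing A]

lemma norm_le_norm_one {lam : ℂ} (hlam : ‖lam‖ = 1) (x : V) : ‖M x lam‖ ≤ ‖M x 1‖ := by
  refine (M x lam).opNorm_le_of_pairElem (M x 1).opNorm_nonneg fun c y => ?_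
  rw [hM.apply_eq_apply_one hlam,
    ← norm_pairElem_smul_smul hlam ((Complex.norm_conj lam).trans hlam) c y]
  exact (M x 1).le_opNorm _

lemma numRadius_eq (x : V) : numRadius M x = ‖M x 1‖ / 2 := by
  have hgreatest : IsGreatest ((fun lam : ℂ => ‖M x lam‖) '' {lam : ℂ | ‖lam‖ = 1}) ‖M x 1‖ := by
    refine ⟨⟨1, norm_one, rfl⟩, ?_⟩
    rintro - ⟨lam, hlam, rfl⟩
    exact hM.norm_le_norm_one hlam x
  rw [numRadius, hgreatest.csSup_eq]
  ring

lemma norm_unop_inner_le (x y : V) : ‖unop (inner Aᵐᵒᵖ x y)‖ ≤ ‖M x 1‖ * ‖y‖ :=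
  calc ‖unop (inner Aᵐᵒᵖ x y)‖ ≤ ‖M x 1 (pairElem 0 y)‖ := by
        rw [hM.apply_one]; exact norm_le_norm_pairElem_left _ _
    _ ≤ ‖M x 1‖ * ‖pairElem (0 : A) y‖ := (M x 1).le_opNorm _
    _ ≤ ‖M x 1‖ * ‖y‖ := by gcongr; simpa using norm_pairElem_le (0 : A) y

lemma norm_op_smul_le (x : V) (c : A) : ‖x <• c‖ ≤ ‖M x 1‖ * ‖c‖ :=
  calc ‖x <• c‖ ≤ ‖M x 1 (pairElem c 0)‖ := by
        rw [hM.apply_one]; exact norm_le_norm_pairElem_right _ _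
    _ ≤ ‖M x 1‖ * ‖pairElem c (0 : V)‖ := (M x 1).le_opNorm _
    _ ≤ ‖M x 1‖ * ‖c‖ := by gcongr; simpa using norm_pairElem_le c (0 : V)

lemma norm_one_op_smul_le (x : V) (s : A) : ‖M (x <• s) 1‖ ≤ 2 * ‖s‖ * ‖M x 1‖ := by
  refine (M (x <• s) 1).opNorm_le_of_pairElem (by positivity) fun c y => ?_
  have hinner : unop (inner Aᵐᵒᵖ (x <• s) y) = star s * unop (inner Aᵐᵒᵖ x y) := by
    simp only [CStarModule.inner_op_smul_left, unop_mul, unop_star, unop_op]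
  have hsmul : (x <• s) <• c = x <• (s * c) := by
    rw [CStarModule.smul_smul, ← op_mul]
  calc ‖M (x <• s) 1 (pairElem c y)‖
      ≤ ‖star s * unop (inner Aᵐᵒᵖ x y)‖ + ‖x <• (s * c)‖ := by
        rw [hM.apply_one, hinner, ← hsmul]; exact norm_pairElem_le _ _
    _ ≤ ‖s‖ * (‖M x 1‖ * ‖y‖) + ‖M x 1‖ * (‖s‖ * ‖c‖) := by
        gcongr
        · exact (norm_mul_le _ _).trans (by rw [norm_star]; gcongr; exact hM.norm_unop_inner_le x y)
        · exact (hM.norm_op_smul_le x _).trans (by gcongr; exact norm_mul_le _ _)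
    _ ≤ 2 * ‖s‖ * ‖M x 1‖ * ‖pairElem c y‖ := by
        have := norm_le_norm_pairElem_left c y
        have := norm_le_norm_pairElem_right c y
        have : 0 ≤ ‖s‖ * ‖M x 1‖ := by positivity
        nlinarith

lemma numRadius_op_smul_le (x : V) (s : A) : numRadius M (x <• s) ≤ 2 * ‖s‖ * numRadius M x := by
  rw [hM.numRadius_eq, hM.numRadius_eq]
  linarith [hM.norm_one_op_smul_le x s]

end IsM

open scoped ComplexStarModule

lemma two_mul_norm_realPart {A : Type*} [NormedAddCommGroup A] [NormedSpace ℂ A] [StarAddMonoid A]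
    [StarModule ℂ A] (a : A) : 2 * ‖(ℜ a : A)‖ = ‖a + star a‖ := by
  rw [realPart_apply_coe, norm_smul, norm_inv, Real.norm_two, ← mul_assoc,
    mul_inv_cancel₀ two_ne_zero, one_mul]

section

variable {A V : Type*} [NonUnitalCStarAlgebra A] [PartialOrder A] [NormedAddCommGroup V]
  [Module ℂ V] [SMul Aᵐᵒᵖ V] [CStarModule Aᵐᵒᵖ V]

lemma op_smul_realPart_of_op_smul_star {x : V} {a : A} (h : x <• a = x <• star a) :
    x <• (ℜ a : A) = x <• a := by
  rw [realPart_apply_coe, ← Complex.coe_smul, op_smul, CStarModule.smul_assoc_complex, op_add,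
    CStarModule.add_smul, ← h, ← two_smul ℂ, smul_smul]
  norm_num

end

theorem stmt10 (M : V → ℂ → (WithCStarModule Aᵐᵒᵖ (Aᵐᵒᵖ × V) →L[ℂ] WithCStarModule Aᵐᵒᵖ (Aᵐᵒᵖ × V))) (hM : IsM M) (a : A) (x : V)
    (h : x <• a = x <• star a) :
    numRadius M (x <• a) ≤ ‖a + star a‖ * numRadius M x := by
  calc numRadius M (x <• a) = numRadius M (x <• (ℜ a : A)) := by
        rw [op_smul_realPart_of_op_smul_star h]
    _ ≤ 2 * ‖(ℜ a : A)‖ * numRadius M x := hM.numRadius_op_smul_le x _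
    _ = ‖a + star a‖ * numRadius M x := by rw [two_mul_norm_realPart]
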